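/- The thirteen evaluation vectors mₖ := (pₖ(v))_{v ∈ V} ∈ ℝ¹³ of the D2Q13 moment polynomials p₀ = 1, p₁ = −28 + 13(x²+y²), p₂ = 140 + (x²+y²)(−361/2 + (77/2)(x²+y²)), p₃ = −12 + (x²+y²)(581/12 + (x²+y²)(−273/8 + (137/24)(x²+y²))), p₄ = x, p₅ = y, p₆ = x((x²+y²) − 3), p₇ = y((x²+y²) − 3), p₈ = x(101/6 + (x²+y²)(−63/4 + (35/12)(x²+y²))), p₉ = y(101/6 + (x²+y²)(−63/4 + (35/12)(x²+y²))), p₁₀ = x² − y², p₁₁ = xy, p₁₂ = (x² − y²)(−65/12 + (17/12)(x²+y²)) are pairwise orthogonal and all nonzero, hence they form an orthogonal basis of ℝ¹³; in particular the 13 × 13 moment matrix M with entries M_{k,j} = pₖ(vⱼ) is invertible. -/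

import Mathlib

/-- The D2Q13 velocities `v₀, …, v₁₂`, enumerated in the standard order. -/
def d2q13Vel : Fin 13 → ℤ × ℤ :=
  ![(0, 0), (1, 0), (0, 1), (-1, 0), (0, -1), (1, 1), (-1, 1), (-1, -1), (1, -1),
    (2, 0), (0, 2), (-2, 0), (0, -2)]

/-- The thirteen moment polynomials `p₀, …, p₁₂` of the D2Q13 lattice Boltzmann scheme,
viewed as real functions of the two variables `x, y`. -/
noncomputable def d2q13Moment : Fin 13 → ℝ → ℝ → ℝ :=
  ![fun _ _ => 1,
    fun x y => -28 + 13 * (x ^ 2 + y ^ 2),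
    fun x y => 140 + (x ^ 2 + y ^ 2) * (-361 / 2 + (77 / 2) * (x ^ 2 + y ^ 2)),
    fun x y => -12 + (x ^ 2 + y ^ 2) *
      (581 / 12 + (x ^ 2 + y ^ 2) * (-273 / 8 + (137 / 24) * (x ^ 2 + y ^ 2))),
    fun x _ => x,
    fun _ y => y,
    fun x y => x * ((x ^ 2 + y ^ 2) - 3),
    fun x y => y * ((x ^ 2 + y ^ 2) - 3),
    fun x y => x * (101 / 6 + (x ^ 2 + y ^ 2) * (-63 / 4 + (35 / 12) * (x ^ 2 + y ^ 2))),
    fun x y => y * (101 / 6 + (x ^ 2 + y ^ 2) * (-63 / 4 + (35 / 12) * (x ^ 2 + y ^ 2))),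
    fun x y => x ^ 2 - y ^ 2,
    fun x y => x * y,
    fun x y => (x ^ 2 - y ^ 2) * (-65 / 12 + (17 / 12) * (x ^ 2 + y ^ 2))]

/-- The evaluation vector `mₖ = (pₖ(vⱼ))ⱼ ∈ ℝ¹³` of the `k`-th moment polynomial on the
D2Q13 velocity set. -/
noncomputable def d2q13MomentVec (k : Fin 13) : Fin 13 → ℝ :=
  fun j => d2q13Moment k ((d2q13Vel j).1 : ℝ) ((d2q13Vel j).2 : ℝ)

/-- The 13 × 13 moment matrix `M` with entries `M k j = pₖ(vⱼ)`. -/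
noncomputable def d2q13MomentMatrix : Matrix (Fin 13) (Fin 13) ℝ :=
  Matrix.of fun k j => d2q13MomentVec k j

/-! Multiplying the moment polynomials by 24 clears all denominators, so the 169 inner
products of the evaluation vectors are fixed rational multiples of integer sums, settled by a
finite integer computation. Pairwise orthogonal vectors of nonzero norm are linearly independent,
and thirteen independent vectors in `ℝ¹³` form a basis. -/

open Matrix

theorem linearIndependent_of_dotProduct_eq_zero {K ι n : Type*} [Field K] [Fintype n]
    {v : ι → n → K} (horth : ∀ k l, k ≠ l → v k ⬝ᵥ v l = 0) (hself : ∀ k, v k ⬝ᵥ v k ≠ 0) :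
    LinearIndependent K v :=
  LinearMap.BilinForm.linearIndependent_of_iIsOrtho (B := dotProductBilin K K)
    (LinearMap.BilinForm.iIsOrtho_def.2 horth) hself

def d2q13IntMoment : Fin 13 → ℤ → ℤ → ℤ :=
  ![fun _ _ => 24,
    fun x y => -672 + 312 * (x ^ 2 + y ^ 2),
    fun x y => 3360 + (x ^ 2 + y ^ 2) * (-4332 + 924 * (x ^ 2 + y ^ 2)),
    fun x y => -288 + (x ^ 2 + y ^ 2) * (1162 + (x ^ 2 + y ^ 2) * (-819 + 137 * (x ^ 2 + y ^ 2))),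
    fun x _ => 24 * x,
    fun _ y => 24 * y,
    fun x y => 24 * x * ((x ^ 2 + y ^ 2) - 3),
    fun x y => 24 * y * ((x ^ 2 + y ^ 2) - 3),
    fun x y => x * (404 + (x ^ 2 + y ^ 2) * (-378 + 70 * (x ^ 2 + y ^ 2))),
    fun x y => y * (404 + (x ^ 2 + y ^ 2) * (-378 + 70 * (x ^ 2 + y ^ 2))),
    fun x y => 24 * (x ^ 2 - y ^ 2),
    fun x y => 24 * x * y,
    fun x y => (x ^ 2 - y ^ 2) * (-130 + 34 * (x ^ 2 + y ^ 2))]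

def d2q13IntMomentVec (k j : Fin 13) : ℤ :=
  d2q13IntMoment k (d2q13Vel j).1 (d2q13Vel j).2

theorem d2q13Moment_intCast (k : Fin 13) (a b : ℤ) :
    d2q13Moment k a b = d2q13IntMoment k a b / 24 := by
  fin_cases k <;>
    simp only [d2q13Moment, d2q13IntMoment, Fin.zero_eta, Fin.mk_one, Fin.reduceFinMk, Fin.isValue,
      cons_val', cons_val_fin_one, cons_val, cons_val_one, cons_val_zero] <;>
    push_cast <;> ring

theorem d2q13MomentVec_dotProduct (k l : Fin 13) :
    d2q13MomentVec k ⬝ᵥ d2q13MomentVec l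
      = ((d2q13IntMomentVec k ⬝ᵥ d2q13IntMomentVec l : ℤ) : ℝ) / 576 := by
  simp only [dotProduct, d2q13MomentVec, d2q13IntMomentVec, d2q13Moment_intCast, Int.cast_sum,
    Int.cast_mul, Finset.sum_div]
  refine Finset.sum_congr rfl fun j _ => ?_
  ring

theorem d2q13IntMomentVec_orthogonal :
    ∀ k l : Fin 13, k ≠ l → d2q13IntMomentVec k ⬝ᵥ d2q13IntMomentVec l = 0 := by
  decide

theorem d2q13IntMomentVec_self_ne_zero :
    ∀ k : Fin 13, d2q13IntMomentVec k ⬝ᵥ d2q13IntMomentVec k ≠ 0 := by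
  decide

/-- The thirteen evaluation vectors of the D2Q13 moment polynomials are pairwise
orthogonal for the standard Euclidean inner product on `ℝ¹³` and all nonzero, hence they
form an orthogonal basis of `ℝ¹³`: they are linearly independent and span `ℝ¹³`.
In particular, the 13 × 13 moment matrix is invertible. -/
theorem d2q13_moments_orthogonal_basis :
    (∀ k l : Fin 13, k ≠ l → ∑ j : Fin 13, d2q13MomentVec k j * d2q13MomentVec l j = 0) ∧
    (∀ k : Fin 13, d2q13MomentVec k ≠ 0) ∧
    LinearIndependent ℝ d2q13MomentVec ∧
    Submodule.span ℝ (Set.range d2q13MomentVec) = ⊤ ∧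
    IsUnit d2q13MomentMatrix := by
  have horth (k l : Fin 13) (hkl : k ≠ l) : d2q13MomentVec k ⬝ᵥ d2q13MomentVec l = 0 := by
    rw [d2q13MomentVec_dotProduct, d2q13IntMomentVec_orthogonal k l hkl, Int.cast_zero,
      zero_div]
  have hself (k : Fin 13) : d2q13MomentVec k ⬝ᵥ d2q13MomentVec k ≠ 0 := by
    rw [d2q13MomentVec_dotProduct]
    exact div_ne_zero (Int.cast_ne_zero.2 (d2q13IntMomentVec_self_ne_zero k)) (by norm_num)
  have hli : LinearIndependent ℝ d2q13MomentVec :=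
    linearIndependent_of_dotProduct_eq_zero horth hself
  exact ⟨horth, hli.ne_zero, hli, hli.span_eq_top_of_card_eq_finrank (by simp),
    linearIndependent_rows_iff_isUnit.mp hli⟩
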